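/- arXiv:2510.16177 — 7 statements merged into one kernel-verified Lean document; each statement's English description precedes it below -/
import Mathlib

section
/- Let C be a set of finite words over an alphabet A satisfying: (i) there is a finite upper bound on the length of words in C, and (ii) for any equivalence class P of prefixes of C (two prefixes being equivalent when they admit a common completion to a word of C by the same postfix) and equivalence class X of postfixes of C, if some p ∈ P and x ∈ X satisfy px ∈ C, then px ∈ C for all p ∈ P and x ∈ X. Then whenever p is a prefix of C, w is any word, x is a postfix of C, and both px ∈ C and pwx ∈ C, the word w must be empty. -/
/-! Basic notions for chain systems on words over an alphabet. -/

namespace ChainSys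

variable {A : Type*}

/-- `p` is a prefix (initial segment) of some word of `C`. -/
def PreWord (C : Set (List A)) (p : List A) : Prop := ∃ x, p ++ x ∈ C

/-- `x` is a postfix (final segment) of some word of `C`. -/
def PostWord (C : Set (List A)) (x : List A) : Prop := ∃ p, p ++ x ∈ C

/-- Two prefixes of `C` are equivalent when some common postfix completes both into `C`. -/
def PreEquiv (C : Set (List A)) (p₁ p₂ : List A) : Prop :=
  ∃ x, p₁ ++ x ∈ C ∧ p₂ ++ x ∈ C

/-- Two postfixes of `C` are equivalent when some common prefix completes both into `C`. -/
def PostEquiv (C : Set (List A)) (x₁ x₂ : List A) : Prop :=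
  ∃ p, p ++ x₁ ∈ C ∧ p ++ x₂ ∈ C

/-- A chain system: (i) bounded word lengths; (ii) whether `p ++ x ∈ C` depends only on the
equivalence classes of the prefix `p` and the postfix `x`; (iii) unique single-letter
substitution. -/
def IsChainSystem (C : Set (List A)) : Prop :=
  (∃ N, ∀ w ∈ C, w.length ≤ N) ∧
  (∀ p₁ p₂ x₁ x₂, PreEquiv C p₁ p₂ → PostEquiv C x₁ x₂ → p₁ ++ x₁ ∈ C → p₂ ++ x₂ ∈ C) ∧
  (∀ (p : List A) (a : A) (w x : List A), p ++ [a] ++ x ∈ C → p ++ w ++ x ∈ C → w = [a])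

/-- The prefix order on (equivalence classes of) prefixes of `C`, at the level of
representatives: `P ≤ Q` iff some representative of `P` is an initial segment of some
representative of `Q`. -/
def LePre (C : Set (List A)) (p q : List A) : Prop :=
  ∃ p' q', PreEquiv C p p' ∧ PreEquiv C q q' ∧ p' <+: q'

/-- Cover relations of the prefix order, at the level of representatives. -/
def CoverPre (C : Set (List A)) (p q : List A) : Prop :=
  LePre C p q ∧ ¬ PreEquiv C p q ∧
    ∀ r, LePre C p r → LePre C r q → PreEquiv C r p ∨ PreEquiv C r q

end ChainSys

open ChainSys

/-- In a set of words with bounded lengths satisfying the prefix/postfix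
class compatibility condition, if `p ++ x ∈ C` and `p ++ w ++ x ∈ C` for a prefix `p` and a
postfix `x`, then `w` is empty. -/
theorem statement_0 {A : Type*} (C : Set (List A))
    (hbound : ∃ N, ∀ w ∈ C, w.length ≤ N)
    (hcompat : ∀ p₁ p₂ x₁ x₂, PreEquiv C p₁ p₂ → PostEquiv C x₁ x₂ →
      p₁ ++ x₁ ∈ C → p₂ ++ x₂ ∈ C)
    (p w x : List A) (hp : PreWord C p) (hx : PostWord C x)
    (hpx : p ++ x ∈ C) (hpwx : p ++ w ++ x ∈ C) : w = [] := by
  by_contra hw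
  have hpost : PostEquiv C x (w ++ x) := ⟨p, hpx, by simpa [List.append_assoc] using hpwx⟩
  have key : ∀ n : ℕ, p ++ (List.replicate n w).flatten ++ x ∈ C := by
    intro n
    induction n with
    | zero => simpa using hpx
    | succ n ih =>
      have hpre : PreEquiv C (p ++ (List.replicate n w).flatten)
          (p ++ (List.replicate n w).flatten) := ⟨x, ih, ih⟩
      have := hcompat _ _ _ _ hpre hpost ih
      simpa [List.replicate_succ', List.append_assoc] using this
  obtain ⟨N, hN⟩ := hbound
  have hlen := hN _ (key (N + 1))
  have hwlen : 1 ≤ w.length := List.length_pos_iff.mpr hw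
  have hjoin : (List.replicate (N + 1) w).flatten.length = (N + 1) * w.length := by
    simp [List.length_flatten, Function.comp]
  simp only [List.length_append, hjoin] at hlen
  nlinarith
end

section
/- Let C be a chain system on an alphabet A. The map post, sending the equivalence class of a prefix p (with px ∈ C) to the equivalence class of the postfix x, is a well-defined bijection from the set of equivalence classes of prefixes of C to the set of equivalence classes of postfixes of C, with inverse the analogously defined map pre. -/
open ChainSys

/-- Equivalence classes of prefixes of `C`. -/
def PreClass {A : Type*} (C : Set (List A)) : Type _ :=
  Quot (fun p q : {p : List A // PreWord C p} => PreEquiv C p.1 q.1)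

/-- Equivalence classes of postfixes of `C`. -/
def PostClass {A : Type*} (C : Set (List A)) : Type _ :=
  Quot (fun x y : {x : List A // PostWord C x} => PostEquiv C x.1 y.1)

theorem postEquiv_trans' {A : Type*} {C : Set (List A)} (h : IsChainSystem C)
    {x y z : List A} (h1 : PostEquiv C x y) (h2 : PostEquiv C y z) : PostEquiv C x z := by
  obtain ⟨q, hq1, hq2⟩ := h1
  obtain ⟨r, hr1, hr2⟩ := h2
  exact ⟨r, h.2.1 q r x x ⟨y, hq2, hr1⟩ ⟨q, hq1, hq1⟩ hq1, hr2⟩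

theorem preEquiv_trans' {A : Type*} {C : Set (List A)} (h : IsChainSystem C)
    {x y z : List A} (h1 : PreEquiv C x y) (h2 : PreEquiv C y z) : PreEquiv C x z := by
  obtain ⟨q, hq1, hq2⟩ := h1
  obtain ⟨r, hr1, hr2⟩ := h2
  exact ⟨r, h.2.1 x x q r ⟨q, hq1, hq1⟩ ⟨y, hq2, hr1⟩ hq1, hr2⟩

/-- For a chain system `C`, the map `post`, sending the class of a prefix
`p` (with `p ++ x ∈ C`) to the class of the postfix `x`, is a well-defined bijection from
prefix classes to postfix classes, with inverse the analogous map `pre`. -/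
theorem statement_1 {A : Type*} (C : Set (List A)) (h : IsChainSystem C) :
    ∃ (post : PreClass C → PostClass C) (pre : PostClass C → PreClass C),
      (∀ (p x : List A) (hpx : p ++ x ∈ C),
        post (Quot.mk _ ⟨p, ⟨x, hpx⟩⟩) = Quot.mk _ ⟨x, ⟨p, hpx⟩⟩) ∧
      (∀ (p x : List A) (hpx : p ++ x ∈ C),
        pre (Quot.mk _ ⟨x, ⟨p, hpx⟩⟩) = Quot.mk _ ⟨p, ⟨x, hpx⟩⟩) ∧
      Function.Bijective post ∧
      Function.LeftInverse pre post ∧ Function.RightInverse pre post := by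
  set post : PreClass C → PostClass C :=
    Quot.lift (fun p => Quot.mk _ (⟨p.2.choose, ⟨p.1, p.2.choose_spec⟩⟩ :
        {x : List A // PostWord C x}))
      (by
        rintro ⟨p, hp⟩ ⟨q, hq⟩ ⟨x, hx1, hx2⟩
        apply Quot.sound
        exact postEquiv_trans' h ⟨p, hp.choose_spec, hx1⟩ ⟨q, hx2, hq.choose_spec⟩)
    with hpost
  set pre : PostClass C → PreClass C :=
    Quot.lift (fun x => Quot.mk _ (⟨x.2.choose, ⟨x.1, x.2.choose_spec⟩⟩ :
        {p : List A // PreWord C p}))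
      (by
        rintro ⟨x, hx⟩ ⟨y, hy⟩ ⟨p, hp1, hp2⟩
        apply Quot.sound
        exact preEquiv_trans' h ⟨x, hx.choose_spec, hp1⟩ ⟨y, hp2, hy.choose_spec⟩)
    with hpre
  have hpostspec : ∀ (p x : List A) (hpx : p ++ x ∈ C),
      post (Quot.mk _ ⟨p, ⟨x, hpx⟩⟩) = Quot.mk _ ⟨x, ⟨p, hpx⟩⟩ := by
    intro p x hpx
    apply Quot.sound
    exact ⟨p, (⟨x, hpx⟩ : PreWord C p).choose_spec, hpx⟩
  have hprespec : ∀ (p x : List A) (hpx : p ++ x ∈ C),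
      pre (Quot.mk _ ⟨x, ⟨p, hpx⟩⟩) = Quot.mk _ ⟨p, ⟨x, hpx⟩⟩ := by
    intro p x hpx
    apply Quot.sound
    exact ⟨x, (⟨p, hpx⟩ : PostWord C x).choose_spec, hpx⟩
  have hli : Function.LeftInverse pre post := by
    intro P
    induction P using Quot.ind with
    | _ p =>
      obtain ⟨p, x, hpx⟩ := p
      rw [hpostspec p x hpx, hprespec p x hpx]
  have hri : Function.RightInverse pre post := by
    intro X
    induction X using Quot.ind with
    | _ x =>
      obtain ⟨x, p, hpx⟩ := x
      rw [hprespec p x hpx, hpostspec p x hpx]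
  exact ⟨post, pre, hpostspec, hprespec, ⟨hli.injective, hri.surjective⟩, hli, hri⟩
end

section
/- Let C be a chain system. Define a relation ≤_pre on equivalence classes of prefixes of C by P ≤_pre Q iff there exist p ∈ P and q ∈ Q such that p is a prefix (initial segment) of q. Then ≤_pre is a partial order (in particular antisymmetric) with unique minimal element the class of the empty word and unique maximal element the class C itself. -/
open ChainSys

section Aux
open ChainSys
variable {A : Type*} {C : Set (List A)}

lemma preEquiv_symm {p q : List A} (h : PreEquiv C p q) : PreEquiv C q p :=
  let ⟨x, h1, h2⟩ := h; ⟨x, h2, h1⟩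

lemma mem_congr
    (h2 : ∀ p₁ p₂ x₁ x₂, PreEquiv C p₁ p₂ → PostEquiv C x₁ x₂ → p₁ ++ x₁ ∈ C → p₂ ++ x₂ ∈ C)
    {p q x : List A} (he : PreEquiv C p q) (hm : p ++ x ∈ C) : q ++ x ∈ C :=
  h2 p q x x he ⟨p, hm, hm⟩ hm

lemma preEquiv_trans
    (h2 : ∀ p₁ p₂ x₁ x₂, PreEquiv C p₁ p₂ → PostEquiv C x₁ x₂ → p₁ ++ x₁ ∈ C → p₂ ++ x₂ ∈ C)
    {p q r : List A} (hpq : PreEquiv C p q) (hqr : PreEquiv C q r) : PreEquiv C p r := by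
  obtain ⟨y, hq, hr⟩ := hqr
  exact ⟨y, mem_congr h2 (preEquiv_symm hpq) hq, hr⟩

/-- Growth lemma: if `q ++ x ∈ C` and `q ++ u ++ x ∈ C` then one can pump `u`. -/
lemma grow
    (h2 : ∀ p₁ p₂ x₁ x₂, PreEquiv C p₁ p₂ → PostEquiv C x₁ x₂ → p₁ ++ x₁ ∈ C → p₂ ++ x₂ ∈ C)
    {q x u : List A} (h0 : q ++ x ∈ C) (h1 : q ++ (u ++ x) ∈ C) (hu : u ≠ []) :
    ∀ n : ℕ, ∃ v : List A, q ++ (v ++ x) ∈ C ∧ n ≤ v.length := by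
  intro n
  induction n with
  | zero => exact ⟨u, h1, Nat.zero_le _⟩
  | succ n ih =>
    obtain ⟨v, hv, hlen⟩ := ih
    have he : PreEquiv C q (q ++ v) := ⟨x, h0, by rwa [List.append_assoc]⟩
    have : (q ++ v) ++ (u ++ x) ∈ C := mem_congr h2 he h1
    refine ⟨v ++ u, by simpa only [List.append_assoc] using this, ?_⟩
    have : 1 ≤ u.length := List.length_pos_iff.mpr hu
    simp only [List.length_append]; omega
end Aux

/-- For a chain system `C`, the relation `≤_pre` on equivalence classes of
prefixes is a partial order (reflexive, transitive, and antisymmetric up to prefix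
equivalence), with unique minimal element the class of the empty word and unique maximal
element the class of the words of `C` themselves. -/
theorem statement_2 {A : Type*} (C : Set (List A)) (h : IsChainSystem C) :
    -- reflexivity on prefixes
    (∀ p, PreWord C p → LePre C p p) ∧
    -- transitivity
    (∀ p q r, LePre C p q → LePre C q r → LePre C p r) ∧
    -- antisymmetry (up to equivalence of representatives)
    (∀ p q, LePre C p q → LePre C q p → PreEquiv C p q) ∧
    -- the class of the empty word is below every class
    (∀ p, PreWord C p → LePre C ([] : List A) p) ∧
    -- the class of the full words of `C` is above every class
    (∀ p w, PreWord C p → w ∈ C → LePre C p w) ∧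
    -- uniqueness of the minimal element
    (∀ p, PreWord C p → (∀ q, PreWord C q → LePre C q p → PreEquiv C q p) →
      PreEquiv C p ([] : List A)) ∧
    -- uniqueness of the maximal element
    (∀ p, PreWord C p → (∀ q, PreWord C q → LePre C p q → PreEquiv C p q) →
      ∃ w ∈ C, PreEquiv C p w) := by
  obtain ⟨⟨N, hN⟩, h2, _h3⟩ := h
  have refl : ∀ p, PreWord C p → LePre C p p := by
    rintro p ⟨x, hx⟩
    exact ⟨p, p, ⟨x, hx, hx⟩, ⟨x, hx, hx⟩, List.prefix_rfl⟩
  have trans : ∀ p q r, LePre C p q → LePre C q r → LePre C p r := by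
    rintro p q r ⟨p', q', hpp', hqq', hpre⟩ ⟨q₂, r₂, hqq₂, hrr₂, t, ht⟩
    -- q' ≡ q₂, r₂ = q₂ ++ t
    have hq'q₂ : PreEquiv C q' q₂ := preEquiv_trans h2 (preEquiv_symm hqq') hqq₂
    obtain ⟨y, -, hy⟩ := id hrr₂
    have hr₂C : q₂ ++ (t ++ y) ∈ C := by rw [← List.append_assoc, ht]; exact hy
    have hq't : q' ++ (t ++ y) ∈ C := mem_congr h2 (preEquiv_symm hq'q₂) hr₂C
    refine ⟨p', q' ++ t, hpp', ?_, hpre.trans ⟨t, rfl⟩⟩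
    refine preEquiv_trans h2 hrr₂ ⟨y, ?_, ?_⟩
    · exact hy
    · rwa [List.append_assoc]
  have antisymm : ∀ p q, LePre C p q → LePre C q p → PreEquiv C p q := by
    rintro p q ⟨p', q', hpp', hqq', s, hs⟩ ⟨q₂, p₂, hqq₂, hpp₂, t, ht⟩
    -- q' = p' ++ s, p₂ = q₂ ++ t
    obtain ⟨x₂, hqx₂, hq₂x₂⟩ := id hqq₂
    -- transport: q' ++ x₂ ∈ C
    have hq'q₂ : PreEquiv C q' q₂ := preEquiv_trans h2 (preEquiv_symm hqq') hqq₂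
    have hq'x₂ : q' ++ x₂ ∈ C := mem_congr h2 (preEquiv_symm hq'q₂) hq₂x₂
    -- p' ++ (s ++ x₂) ∈ C
    have hp's : p' ++ (s ++ x₂) ∈ C := by rwa [← List.append_assoc, hs]
    -- p' ≡ p₂ = q₂ ++ t, so q₂ ++ (t ++ s ++ x₂) ∈ C
    have hp'p₂ : PreEquiv C p' p₂ := preEquiv_trans h2 (preEquiv_symm hpp') hpp₂
    have hp₂s : p₂ ++ (s ++ x₂) ∈ C := mem_congr h2 hp'p₂ hp's
    have hq₂ts : q₂ ++ (t ++ (s ++ x₂)) ∈ C := by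
      rw [← ht, List.append_assoc] at hp₂s; exact hp₂s
    -- pumping: t ++ s must be empty
    have hts : t ++ s = [] := by
      by_contra hne
      obtain ⟨v, hv, hlen⟩ := grow h2 hq₂x₂ (by simpa only [List.append_assoc] using hq₂ts) hne (N + 1)
      have := hN _ hv
      simp only [List.length_append] at this
      omega
    obtain ⟨ht0, hs0⟩ := List.append_eq_nil_iff.mp hts
    subst ht0 hs0
    simp only [List.append_nil] at hs ht
    subst hs ht
    exact preEquiv_trans h2 hpp₂ (preEquiv_symm hqq₂)
  refine ⟨refl, trans, antisymm, ?_, ?_, ?_, ?_⟩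
  · -- empty word minimal
    rintro p ⟨x, hx⟩
    exact ⟨[], p, ⟨p ++ x, by simpa using hx, by simpa using hx⟩, ⟨x, hx, hx⟩, List.nil_prefix⟩
  · -- full words maximal
    rintro p w ⟨x, hx⟩ hw
    refine ⟨p, p ++ x, ⟨x, hx, hx⟩, ⟨[], by simpa using hw, by simpa using hx⟩, x, rfl⟩
  · -- uniqueness of minimal
    rintro p hp hmin
    have hnil : PreWord C ([] : List A) := by
      obtain ⟨x, hx⟩ := hp; exact ⟨p ++ x, by simpa using hx⟩
    have hle : LePre C ([] : List A) p := by
      obtain ⟨x, hx⟩ := hp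
      exact ⟨[], p, ⟨p ++ x, by simpa using hx, by simpa using hx⟩, ⟨x, hx, hx⟩, List.nil_prefix⟩
    exact preEquiv_symm (hmin [] hnil hle)
  · -- uniqueness of maximal
    rintro p hp hmax
    obtain ⟨x, hx⟩ := hp
    have hpw : PreWord C (p ++ x) := ⟨[], by simpa using hx⟩
    have hle : LePre C p (p ++ x) :=
      ⟨p, p ++ x, ⟨x, hx, hx⟩, ⟨[], by simpa using hx, by simpa using hx⟩, x, rfl⟩
    exact ⟨p ++ x, hx, hmax (p ++ x) hpw hle⟩
end

section
/- Two chain systems C and C' are isomorphic (i.e., there is a bijection between their alphabets inducing a bijection C → C') if and only if their associated edge-labeled posets P(C) and P(C') are isomorphic as edge-labeled posets. -/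
open ChainSys

/-- An isomorphism of chain systems: a bijection of the alphabets inducing a bijection
between the sets of words. -/
def ChainSystemIso {A A' : Type*} (C : Set (List A)) (C' : Set (List A')) : Prop :=
  ∃ σ : A → A', Function.Bijective σ ∧ ∀ w : List A, w ∈ C ↔ w.map σ ∈ C'

/-- An isomorphism of the associated edge-labeled posets `P(C) ≅ P(C')`, at the level of
representatives of prefix classes: a bijection `σ` of labels and a map `η` on prefixes which
preserves and reflects prefix equivalence, is essentially surjective, is an order isomorphism
for the prefix orders, and sends an edge labeled `a` to an edge labeled `σ a`. -/
def LabeledPosetIso {A A' : Type*} (C : Set (List A)) (C' : Set (List A')) : Prop :=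
  ∃ (σ : A → A') (η : List A → List A'), Function.Bijective σ ∧
    (∀ p, PreWord C p → PreWord C' (η p)) ∧
    (∀ p q, PreWord C p → PreWord C q → (PreEquiv C p q ↔ PreEquiv C' (η p) (η q))) ∧
    (∀ p', PreWord C' p' → ∃ p, PreWord C p ∧ PreEquiv C' (η p) p') ∧
    (∀ p q, PreWord C p → PreWord C q → (LePre C p q ↔ LePre C' (η p) (η q))) ∧
    (∀ p q (a : A), CoverPre C p q → PreEquiv C (p ++ [a]) q →
      PreEquiv C' (η p ++ [σ a]) (η q))

namespace CSAux

open ChainSys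

variable {A : Type*} {C : Set (List A)}

lemma peSymm {p q : List A} (h : PreEquiv C p q) : PreEquiv C q p := by
  obtain ⟨x, h1, h2⟩ := h; exact ⟨x, h2, h1⟩

lemma peLeft {p q : List A} (h : PreEquiv C p q) : PreWord C p := by
  obtain ⟨x, h1, _⟩ := h; exact ⟨x, h1⟩

lemma peRight {p q : List A} (h : PreEquiv C p q) : PreWord C q := peLeft (peSymm h)

lemma peRefl {p : List A} (h : PreWord C p) : PreEquiv C p p := by
  obtain ⟨x, hx⟩ := h; exact ⟨x, hx, hx⟩

lemma peTrans (hC : IsChainSystem C) {p q r : List A}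
    (h1 : PreEquiv C p q) (h2 : PreEquiv C q r) : PreEquiv C p r := by
  obtain ⟨x, hpx, hqx⟩ := h1
  obtain ⟨y, hqy, hry⟩ := h2
  exact ⟨y, hC.2.1 p p x y ⟨x, hpx, hpx⟩ ⟨q, hqx, hqy⟩ hpx, hry⟩

lemma peAppend (hC : IsChainSystem C) {p q u : List A} (h : PreEquiv C p q)
    (hw : PreWord C (p ++ u)) : PreEquiv C (p ++ u) (q ++ u) := by
  obtain ⟨y, hy⟩ := hw
  refine ⟨y, hy, ?_⟩
  have h1 : p ++ (u ++ y) ∈ C := by simpa [List.append_assoc] using hy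
  have h2 : q ++ (u ++ y) ∈ C := hC.2.1 p q (u ++ y) (u ++ y) h ⟨p, h1, h1⟩ h1
  simpa [List.append_assoc] using h2

lemma pump (hC : IsChainSystem C) {p u : List A}
    (h : PreEquiv C p (p ++ u)) : u = [] := by
  by_contra hu
  obtain ⟨x, hpx, hpux⟩ := h
  have key : ∀ k, p ++ (List.replicate k u).flatten ++ x ∈ C := by
    intro k
    induction k with
    | zero => simpa using hpx
    | succ k ih =>
      have h1 : p ++ ((List.replicate k u).flatten ++ x) ∈ C := by
        simpa [List.append_assoc] using ih
      have h2 : (p ++ u) ++ ((List.replicate k u).flatten ++ x) ∈ C :=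
        hC.2.1 p (p ++ u) _ _ ⟨x, hpx, hpux⟩ ⟨p, h1, h1⟩ h1
      simpa [List.replicate_succ, List.append_assoc] using h2
  obtain ⟨N, hN⟩ := hC.1
  have hlen := hN _ (key (N + 1))
  have hj : (List.replicate (N + 1) u).flatten.length = (N + 1) * u.length := by
    simp [List.length_flatten, List.map_replicate, List.sum_replicate, smul_eq_mul]
  have hu1 : 1 ≤ u.length := by
    cases u with
    | nil => exact absurd rfl hu
    | cons a l => simp
  have : (N + 1) * 1 ≤ (N + 1) * u.length := Nat.mul_le_mul_left _ hu1
  simp only [List.length_append, hj] at hlen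
  omega

lemma cancel (hC : IsChainSystem C) {p : List A} {a : A} {w : List A}
    (h : PreEquiv C (p ++ [a]) (p ++ w)) : w = [a] := by
  obtain ⟨x, h1, h2⟩ := h
  exact hC.2.2 p a w x (by simpa [List.append_assoc] using h1)
    (by simpa [List.append_assoc] using h2)

lemma pwPrefix {p q : List A} (hpq : p <+: q) (h : PreWord C q) : PreWord C p := by
  obtain ⟨t, rfl⟩ := hpq
  obtain ⟨x, hx⟩ := h
  exact ⟨t ++ x, by simpa [List.append_assoc] using hx⟩

lemma leOfPrefix {p q : List A} (hpq : p <+: q) (hq : PreWord C q) : LePre C p q :=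
  ⟨p, q, peRefl (pwPrefix hpq hq), peRefl hq, hpq⟩

lemma leLeft {p q : List A} (h : LePre C p q) : PreWord C p := by
  obtain ⟨p', q', h1, _, _⟩ := h; exact peLeft h1

lemma leRight {p q : List A} (h : LePre C p q) : PreWord C q := by
  obtain ⟨p', q', _, h2, _⟩ := h; exact peLeft h2

lemma leCongrLeft (hC : IsChainSystem C) {p p₂ q : List A}
    (h : PreEquiv C p p₂) (hl : LePre C p q) : LePre C p₂ q := by
  obtain ⟨p', q', h1, h2, h3⟩ := hl
  exact ⟨p', q', peTrans hC (peSymm h) h1, h2, h3⟩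

lemma leCongrRight (hC : IsChainSystem C) {p q q₂ : List A}
    (h : PreEquiv C q q₂) (hl : LePre C p q) : LePre C p q₂ := by
  obtain ⟨p', q', h1, h2, h3⟩ := hl
  exact ⟨p', q', h1, peTrans hC (peSymm h) h2, h3⟩

lemma leAppend (hC : IsChainSystem C) {p q : List A} (h : LePre C p q) :
    ∃ u, PreEquiv C q (p ++ u) := by
  obtain ⟨p', q', h1, h2, ⟨u, rfl⟩⟩ := h
  have hw : PreWord C (p' ++ u) := peRight h2
  exact ⟨u, peTrans hC h2 (peAppend hC (peSymm h1) hw)⟩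

lemma antisymm (hC : IsChainSystem C) {p q : List A}
    (h1 : LePre C p q) (h2 : LePre C q p) : PreEquiv C p q := by
  obtain ⟨s, hs⟩ := leAppend hC h1
  obtain ⟨t, ht⟩ := leAppend hC h2
  have hw : PreWord C (q ++ t) := peRight ht
  have h3 : PreEquiv C (q ++ t) ((p ++ s) ++ t) := peAppend hC hs hw
  have h4 : PreEquiv C p (p ++ (s ++ t)) := by
    have := peTrans hC ht h3
    simpa [List.append_assoc] using this
  have h5 := pump hC h4
  have hs0 : s = [] := by
    cases s with
    | nil => rfl
    | cons a l => simp at h5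
  subst hs0
  simpa using peSymm hs

lemma memIff (hC : IsChainSystem C) (w : List A) :
    w ∈ C ↔ PreWord C w ∧ ∀ r, LePre C w r → PreEquiv C w r := by
  constructor
  · intro hw
    refine ⟨⟨[], by simpa using hw⟩, fun r hr => ?_⟩
    obtain ⟨u, hu⟩ := leAppend hC hr
    obtain ⟨y, _, hy⟩ := id hu
    have h1 : PreEquiv C w (w ++ (u ++ y)) :=
      ⟨[], by simpa using hw, by simpa [List.append_assoc] using hy⟩
    have h2 := pump hC h1
    have hu0 : u = [] := by
      cases u with
      | nil => rfl
      | cons a l => simp at h2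
    subst hu0
    exact peSymm (by simpa using hu)
  · rintro ⟨⟨x, hx⟩, hmax⟩
    have hle : LePre C w (w ++ x) := leOfPrefix ⟨x, rfl⟩ ⟨[], by simpa using hx⟩
    have hx0 := pump hC (hmax _ hle)
    subst hx0
    simpa using hx

lemma coverSingleton (hC : IsChainSystem C) {p : List A} {a : A}
    (h : PreWord C (p ++ [a])) : CoverPre C p (p ++ [a]) := by
  refine ⟨leOfPrefix ⟨[a], rfl⟩ h, ?_, ?_⟩
  · intro hcon
    have := pump hC hcon
    simp at this
  · intro r h1 h2
    obtain ⟨w, hw⟩ := leAppend hC h1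
    have h2' : LePre C (p ++ w) (p ++ [a]) := leCongrLeft hC hw h2
    obtain ⟨t, ht⟩ := leAppend hC h2'
    have ht' : PreEquiv C (p ++ [a]) (p ++ (w ++ t)) := by
      simpa [List.append_assoc] using ht
    have hwt := cancel hC ht'
    rcases w with _ | ⟨b, w'⟩
    · left
      exact (by simpa using hw : PreEquiv C r p)
    · right
      have hba : b = a ∧ w' ++ t = [] := by simpa using hwt
      obtain ⟨rfl, h0⟩ := hba
      have hw0 : w' = [] := by
        cases w' with
        | nil => rfl
        | cons c l => simp at h0
      subst hw0
      exact hw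

lemma coverExistsSingle (hC : IsChainSystem C) {p q : List A} (h : CoverPre C p q) :
    ∃ a, PreEquiv C q (p ++ [a]) := by
  obtain ⟨hle, hne, hmid⟩ := h
  obtain ⟨w, hw⟩ := leAppend hC hle
  rcases w with _ | ⟨a, w'⟩
  · exact absurd (peSymm (by simpa using hw)) hne
  · refine ⟨a, ?_⟩
    have hpw : PreWord C (p ++ (a :: w')) := peRight hw
    have hpa : PreWord C (p ++ [a]) := pwPrefix ⟨w', by simp⟩ hpw
    have h1 : LePre C p (p ++ [a]) := leOfPrefix ⟨[a], rfl⟩ hpa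
    have h2 : LePre C (p ++ [a]) q := by
      have h3 : LePre C (p ++ [a]) (p ++ (a :: w')) := leOfPrefix ⟨w', by simp⟩ hpw
      exact leCongrRight hC (peSymm hw) h3
    rcases hmid _ h1 h2 with hcase | hcase
    · exfalso
      have := pump hC (peSymm hcase)
      simp at this
    · exact peSymm hcase

variable {A' : Type*} {C' : Set (List A')}

/-- Key induction: `η p` is equivalent to `p.map σ` for every preword `p`. -/
lemma etaMap (hC : IsChainSystem C) (hC' : IsChainSystem C')
    (σ : A → A') (η : List A → List A')
    (hpre : ∀ p, PreWord C p → PreWord C' (η p))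
    (hsurj : ∀ p', PreWord C' p' → ∃ p, PreWord C p ∧ PreEquiv C' (η p) p')
    (hord : ∀ p q, PreWord C p → PreWord C q → (LePre C p q ↔ LePre C' (η p) (η q)))
    (hedge : ∀ p q (a : A), CoverPre C p q → PreEquiv C (p ++ [a]) q →
      PreEquiv C' (η p ++ [σ a]) (η q)) :
    ∀ p, PreWord C p → PreEquiv C' (η p) (p.map σ) := by
  intro p
  induction p using List.reverseRecOn with
  | nil =>
    intro h0
    have h1 : PreWord C' (η []) := hpre [] h0
    have h2 : PreWord C' ([] : List A') := by
      obtain ⟨x, hx⟩ := h1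
      exact ⟨η [] ++ x, by simpa⟩
    have hle1 : LePre C' [] (η []) := leOfPrefix (List.nil_prefix) h1
    have hle2 : LePre C' (η []) [] := by
      obtain ⟨q, hq, hq'⟩ := hsurj [] h2
      have h3 : LePre C [] q := leOfPrefix (List.nil_prefix) hq
      have h4 := (hord [] q h0 hq).mp h3
      exact leCongrRight hC' hq' h4
    simpa using antisymm hC' hle2 hle1
  | append_singleton p a ih =>
    intro h
    have hp : PreWord C p := pwPrefix ⟨[a], rfl⟩ h
    have ihp := ih hp
    have hcov := coverSingleton hC h
    have hedge' := hedge p (p ++ [a]) a hcov (peRefl h)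
    have h1 : PreWord C' (η p ++ [σ a]) := peLeft hedge'
    have h2 : PreEquiv C' (η p ++ [σ a]) (p.map σ ++ [σ a]) := peAppend hC' ihp h1
    have h3 : PreEquiv C' (η (p ++ [a])) (p.map σ ++ [σ a]) :=
      peTrans hC' (peSymm hedge') h2
    simpa using h3

/-- Membership transfer along a labeled poset isomorphism. -/
lemma memMap (hC : IsChainSystem C) (hC' : IsChainSystem C')
    (σ : A → A') (η : List A → List A')
    (hpre : ∀ p, PreWord C p → PreWord C' (η p))
    (hequiv : ∀ p q, PreWord C p → PreWord C q →
      (PreEquiv C p q ↔ PreEquiv C' (η p) (η q)))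
    (hsurj : ∀ p', PreWord C' p' → ∃ p, PreWord C p ∧ PreEquiv C' (η p) p')
    (hord : ∀ p q, PreWord C p → PreWord C q → (LePre C p q ↔ LePre C' (η p) (η q)))
    (hedge : ∀ p q (a : A), CoverPre C p q → PreEquiv C (p ++ [a]) q →
      PreEquiv C' (η p ++ [σ a]) (η q)) :
    ∀ w ∈ C, w.map σ ∈ C' := by
  have heta := etaMap hC hC' σ η hpre hsurj hord hedge
  intro w hw
  obtain ⟨hwpre, hwmax⟩ := (memIff hC w).mp hw
  have hme : PreEquiv C' (η w) (w.map σ) := heta w hwpre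
  refine (memIff hC' _).mpr ⟨peRight hme, fun r hr => ?_⟩
  have hr1 : LePre C' (η w) r := leCongrLeft hC' (peSymm hme) hr
  have hrpre : PreWord C' r := leRight hr1
  obtain ⟨q, hq, hq'⟩ := hsurj r hrpre
  have hr2 : LePre C' (η w) (η q) := leCongrRight hC' (peSymm hq') hr1
  have h3 : LePre C w q := (hord w q hwpre hq).mpr hr2
  have h4 : PreEquiv C' (η w) (η q) := (hequiv w q hwpre hq).mp (hwmax q h3)
  exact peTrans hC' (peTrans hC' (peSymm hme) h4) hq'

/-- Transport of PreEquiv along equivalences. -/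
lemma peCongr (hC : IsChainSystem C) {a a' b b' : List A}
    (ha : PreEquiv C a a') (hb : PreEquiv C b b') :
    PreEquiv C a b ↔ PreEquiv C a' b' := by
  constructor
  · intro h
    exact peTrans hC (peTrans hC (peSymm ha) h) hb
  · intro h
    exact peTrans hC (peTrans hC ha h) (peSymm hb)

lemma leCongr (hC : IsChainSystem C) {a a' b b' : List A}
    (ha : PreEquiv C a a') (hb : PreEquiv C b b') :
    LePre C a b ↔ LePre C a' b' := by
  constructor
  · intro h
    exact leCongrRight hC hb (leCongrLeft hC ha h)
  · intro h
    exact leCongrRight hC (peSymm hb) (leCongrLeft hC (peSymm ha) h)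

/-- A labeled poset isomorphism can be inverted, with inverse alphabet bijection. -/
lemma isoSymm (hC : IsChainSystem C) (hC' : IsChainSystem C')
    (σ : A → A') (η : List A → List A') (hbij : Function.Bijective σ)
    (hpre : ∀ p, PreWord C p → PreWord C' (η p))
    (hequiv : ∀ p q, PreWord C p → PreWord C q →
      (PreEquiv C p q ↔ PreEquiv C' (η p) (η q)))
    (hsurj : ∀ p', PreWord C' p' → ∃ p, PreWord C p ∧ PreEquiv C' (η p) p')
    (hord : ∀ p q, PreWord C p → PreWord C q → (LePre C p q ↔ LePre C' (η p) (η q)))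
    (hedge : ∀ p q (a : A), CoverPre C p q → PreEquiv C (p ++ [a]) q →
      PreEquiv C' (η p ++ [σ a]) (η q)) :
    ∃ (τ : A' → A) (θ : List A' → List A), (∀ a, τ (σ a) = a) ∧ Function.Bijective τ ∧
      (∀ p, PreWord C' p → PreWord C (θ p)) ∧
      (∀ p q, PreWord C' p → PreWord C' q → (PreEquiv C' p q ↔ PreEquiv C (θ p) (θ q))) ∧
      (∀ p', PreWord C p' → ∃ p, PreWord C' p ∧ PreEquiv C (θ p) p') ∧
      (∀ p q, PreWord C' p → PreWord C' q → (LePre C' p q ↔ LePre C (θ p) (θ q))) ∧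
      (∀ p q (a : A'), CoverPre C' p q → PreEquiv C' (p ++ [a]) q →
        PreEquiv C (θ p ++ [τ a]) (θ q)) := by
  classical
  set e := Equiv.ofBijective σ hbij with he
  obtain ⟨θ, hθ1, hθ2⟩ : ∃ θ : List A' → List A,
      (∀ p', PreWord C' p' → PreWord C (θ p')) ∧
      (∀ p', PreWord C' p' → PreEquiv C' (η (θ p')) p') := by
    choose f h1 h2 using hsurj
    refine ⟨fun p' => if h : PreWord C' p' then f p' h else [], ?_, ?_⟩
    · intro p' h
      simpa [dif_pos h] using h1 p' h
    · intro p' h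
      simpa [dif_pos h] using h2 p' h
  -- central tool: transport of equivalence via η and θ
  have hEq : ∀ p' q', PreWord C' p' → PreWord C' q' →
      (PreEquiv C (θ p') (θ q') ↔ PreEquiv C' p' q') := by
    intro p' q' hp hq
    rw [hequiv _ _ (hθ1 _ hp) (hθ1 _ hq)]
    exact peCongr hC' (hθ2 _ hp) (hθ2 _ hq)
  have hLe : ∀ p' q', PreWord C' p' → PreWord C' q' →
      (LePre C (θ p') (θ q') ↔ LePre C' p' q') := by
    intro p' q' hp hq
    rw [hord _ _ (hθ1 _ hp) (hθ1 _ hq)]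
    exact leCongr hC' (hθ2 _ hp) (hθ2 _ hq)
  refine ⟨e.symm, θ, fun a => e.symm_apply_apply a, e.symm.bijective, hθ1,
    fun p q hp hq => (hEq p q hp hq).symm, ?_, fun p q hp hq => (hLe p q hp hq).symm, ?_⟩
  · -- essential surjectivity of θ
    intro p hp
    refine ⟨η p, hpre p hp, ?_⟩
    have h1 : PreWord C' (η p) := hpre p hp
    have h2 : PreEquiv C' (η (θ (η p))) (η p) := hθ2 _ h1
    exact (hequiv _ _ (hθ1 _ h1) hp).mpr h2
  · -- edge condition
    intro p' q' a' hcov hpe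
    obtain ⟨hle', hne', hmid'⟩ := hcov
    have hp' : PreWord C' p' := leLeft hle'
    have hq' : PreWord C' q' := leRight hle'
    have hp : PreWord C (θ p') := hθ1 _ hp'
    have hq : PreWord C (θ q') := hθ1 _ hq'
    have hep : PreEquiv C' (η (θ p')) p' := hθ2 _ hp'
    have heq : PreEquiv C' (η (θ q')) q' := hθ2 _ hq'
    have hcov2 : CoverPre C (θ p') (θ q') := by
      refine ⟨(hLe p' q' hp' hq').mpr hle', ?_, ?_⟩
      · intro hcon
        exact hne' ((hEq p' q' hp' hq').mp hcon)
      · intro r h1 h2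
        have hr : PreWord C r := leRight h1
        have h1' : LePre C' p' (η r) :=
          leCongrLeft hC' hep ((hord _ _ hp hr).mp h1)
        have h2' : LePre C' (η r) q' :=
          leCongrRight hC' heq ((hord _ _ hr hq).mp h2)
        rcases hmid' (η r) h1' h2' with hcase | hcase
        · left
          exact (hequiv r (θ p') hr hp).mpr (peTrans hC' hcase (peSymm hep))
        · right
          exact (hequiv r (θ q') hr hq).mpr (peTrans hC' hcase (peSymm heq))
    obtain ⟨a, ha⟩ := coverExistsSingle hC hcov2
    have hedge2 : PreEquiv C' (η (θ p') ++ [σ a]) (η (θ q')) :=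
      hedge _ _ a hcov2 (peSymm ha)
    have k1 : PreEquiv C' (η (θ p') ++ [σ a]) q' := peTrans hC' hedge2 heq
    have hpa' : PreWord C' (p' ++ [a']) := peLeft hpe
    have k2 : PreEquiv C' (p' ++ [a']) (η (θ p') ++ [a']) :=
      peAppend hC' (peSymm hep) hpa'
    have k3 : PreEquiv C' (η (θ p') ++ [σ a]) (η (θ p') ++ [a']) :=
      peTrans hC' k1 (peTrans hC' (peSymm hpe) k2)
    have k4 : [a'] = [σ a] := cancel hC' k3
    have k5 : a' = σ a := by simpa using k4
    have k6 : e.symm a' = a := by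
      rw [k5]
      exact e.symm_apply_apply a
    rw [k6]
    exact peSymm ha

end CSAux

/-- Two chain systems are isomorphic if and only if their associated
edge-labeled posets are isomorphic as edge-labeled posets. -/
theorem statement_6 {A A' : Type*} (C : Set (List A)) (C' : Set (List A'))
    (hC : IsChainSystem C) (hC' : IsChainSystem C') :
    ChainSystemIso C C' ↔ LabeledPosetIso C C' := by
  classical
  constructor
  · rintro ⟨σ, hbij, hmem⟩
    set e := Equiv.ofBijective σ hbij with he
    have hsurjL : ∀ l : List A', ∃ l₀ : List A, l₀.map σ = l := by
      intro l
      refine ⟨l.map e.symm, ?_⟩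
      rw [List.map_map]
      have h1 : σ ∘ e.symm = id := by
        funext a
        exact e.apply_symm_apply a
      rw [h1, List.map_id]
    have mapEq : ∀ a b : List A, PreEquiv C a b → PreEquiv C' (a.map σ) (b.map σ) := by
      rintro a b ⟨x, h1, h2⟩
      exact ⟨x.map σ, by rw [← List.map_append]; exact (hmem _).mp h1,
        by rw [← List.map_append]; exact (hmem _).mp h2⟩
    have mapEqRev : ∀ a b : List A, PreEquiv C' (a.map σ) (b.map σ) → PreEquiv C a b := by
      rintro a b ⟨x', h1, h2⟩
      obtain ⟨x, rfl⟩ := hsurjL x'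
      exact ⟨x, (hmem _).mpr (by rw [List.map_append]; exact h1),
        (hmem _).mpr (by rw [List.map_append]; exact h2)⟩
    refine ⟨σ, fun p => p.map σ, hbij, ?_, ?_, ?_, ?_, ?_⟩
    · rintro p ⟨x, hx⟩
      exact ⟨x.map σ, by rw [← List.map_append]; exact (hmem _).mp hx⟩
    · intro p q _ _
      exact ⟨mapEq p q, mapEqRev p q⟩
    · rintro p' ⟨x', hx'⟩
      obtain ⟨p, rfl⟩ := hsurjL p'
      obtain ⟨x, rfl⟩ := hsurjL x'
      have hpx : p ++ x ∈ C := (hmem _).mpr (by rw [List.map_append]; exact hx')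
      exact ⟨p, ⟨x, hpx⟩,
        ⟨x.map σ, by rw [← List.map_append]; exact (hmem _).mp hpx,
          by rw [← List.map_append]; exact (hmem _).mp hpx⟩⟩
    · intro p q _ _
      constructor
      · rintro ⟨p₁, q₁, h1, h2, h3⟩
        refine ⟨p₁.map σ, q₁.map σ, mapEq _ _ h1, mapEq _ _ h2, ?_⟩
        obtain ⟨t, rfl⟩ := h3
        exact ⟨t.map σ, by rw [List.map_append]⟩
      · rintro ⟨p₁', q₁', h1, h2, h3⟩
        obtain ⟨p₁, rfl⟩ := hsurjL p₁'
        obtain ⟨q₁, rfl⟩ := hsurjL q₁'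
        refine ⟨p₁, q₁, mapEqRev _ _ h1, mapEqRev _ _ h2, ?_⟩
        obtain ⟨t', ht⟩ := h3
        obtain ⟨t, rfl⟩ := hsurjL t'
        refine ⟨t, ?_⟩
        have h4 : (p₁ ++ t).map σ = q₁.map σ := by rw [List.map_append]; exact ht
        exact List.map_injective_iff.mpr hbij.injective h4
    · intro p q a hcov hpe
      have h5 := mapEq _ _ hpe
      simpa using h5
  · rintro ⟨σ, η, hbij, hpre, hequiv, hsurj, hord, hedge⟩
    have fwd := CSAux.memMap hC hC' σ η hpre hequiv hsurj hord hedge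
    obtain ⟨τ, θ, hτσ, hτbij, hpre', hequiv', hsurj', hord', hedge'⟩ :=
      CSAux.isoSymm hC hC' σ η hbij hpre hequiv hsurj hord hedge
    have bwd := CSAux.memMap hC' hC τ θ hpre' hequiv' hsurj' hord' hedge'
    refine ⟨σ, hbij, fun w => ⟨fwd w, fun h => ?_⟩⟩
    have h6 := bwd _ h
    have hcomp : (w.map σ).map τ = w := by
      rw [List.map_map]
      have h7 : τ ∘ σ = id := funext hτσ
      rw [h7, List.map_id]
    rwa [hcomp] at h6
end

section
/- Let W be a Coxeter group with reflection set T and let c be a Coxeter element of W. Two prefixes p₁ and p₂ of the set C_c of reduced T-words for c are equivalent (admit a common postfix completing both to reduced T-words for c) if and only if the products of p₁ and p₂ in W are equal; moreover, equivalent prefixes have the same length. -/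
open ChainSys

/-- `c` is a Coxeter element: a product of the simple reflections, each appearing exactly
once, in some order. -/
def IsCoxeterElement {B W : Type*} [Group W] {M : CoxeterMatrix B}
    (cs : CoxeterSystem M W) (c : W) : Prop :=
  ∃ l : List B, l.Nodup ∧ (∀ i : B, i ∈ l) ∧ c = cs.wordProd l

/-- A `T`-word: a finite sequence of reflections. -/
def IsTWord {B W : Type*} [Group W] {M : CoxeterMatrix B}
    (cs : CoxeterSystem M W) (l : List W) : Prop :=
  ∀ t ∈ l, cs.IsReflection t

/-- A reduced `T`-word for `w`: a `T`-word of minimal length whose product is `w`. -/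
def IsReducedTWord {B W : Type*} [Group W] {M : CoxeterMatrix B}
    (cs : CoxeterSystem M W) (w : W) (l : List W) : Prop :=
  IsTWord cs l ∧ l.prod = w ∧
    ∀ l' : List W, IsTWord cs l' → l'.prod = w → l.length ≤ l'.length

/-- The set `C_c` of reduced `T`-words for `c`. -/
def RedTWords {B W : Type*} [Group W] {M : CoxeterMatrix B}
    (cs : CoxeterSystem M W) (c : W) : Set (List W) :=
  {l | IsReducedTWord cs c l}

-- (doc comment moved) A prefix of a reduced `T`-word is a reduced `T`-word for its product. -/
lemma prefix_reduced {B W : Type*} [Group W] {M : CoxeterMatrix B}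
    (cs : CoxeterSystem M W) (c : W) {p x : List W}
    (h : p ++ x ∈ RedTWords cs c) : IsReducedTWord cs p.prod p := by
  obtain ⟨hT, hprod, hmin⟩ := h
  refine ⟨fun t ht => hT t (by simp [ht]), rfl, ?_⟩
  intro l' hl'T hl'prod
  have hT' : IsTWord cs (l' ++ x) := by
    intro t ht
    rcases List.mem_append.mp ht with h1 | h1
    · exact hl'T t h1
    · exact hT t (by simp [h1])
  have hprod' : (l' ++ x).prod = c := by
    rw [List.prod_append, hl'prod, ← List.prod_append, hprod]
  have := hmin (l' ++ x) hT' hprod'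
  simpa using this

/-- Two prefixes of the set of reduced `T`-words for a Coxeter element `c`
are equivalent if and only if their products in `W` are equal; moreover equivalent prefixes
have the same length. -/
theorem statement_9 {B W : Type*} [Group W] {M : CoxeterMatrix B}
    (cs : CoxeterSystem M W) (c : W) (hc : IsCoxeterElement cs c) :
    (∀ p₁ p₂ : List W, PreWord (RedTWords cs c) p₁ → PreWord (RedTWords cs c) p₂ →
      (PreEquiv (RedTWords cs c) p₁ p₂ ↔ p₁.prod = p₂.prod)) ∧
    (∀ p₁ p₂ : List W, PreEquiv (RedTWords cs c) p₁ p₂ → p₁.length = p₂.length) := by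
  constructor
  · intro p₁ p₂ hp₁ hp₂
    constructor
    · rintro ⟨x, h1, h2⟩
      have e1 : p₁.prod * x.prod = c := by
        rw [← List.prod_append]; exact h1.2.1
      have e2 : p₂.prod * x.prod = c := by
        rw [← List.prod_append]; exact h2.2.1
      exact mul_right_cancel (e1.trans e2.symm)
    · intro hprod
      obtain ⟨x₁, hx₁⟩ := hp₁
      obtain ⟨x₂, hx₂⟩ := hp₂
      refine ⟨x₁, hx₁, ?_⟩
      have r₁ := prefix_reduced cs c hx₁
      have r₂ := prefix_reduced cs c hx₂
      have hlen : p₂.length = p₁.length := by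
        refine le_antisymm ?_ ?_
        · exact r₂.2.2 p₁ r₁.1 hprod
        · exact r₁.2.2 p₂ r₂.1 hprod.symm
      obtain ⟨hT, hprodc, hmin⟩ := hx₁
      refine ⟨?_, ?_, ?_⟩
      · intro t ht
        rcases List.mem_append.mp ht with hh | hh
        · exact r₂.1 t hh
        · exact hT t (by simp [hh])
      · rw [List.prod_append, ← hprod, ← List.prod_append, hprodc]
      · intro l' hl'T hl'prod
        have hle : (p₂ ++ x₁).length = (p₁ ++ x₁).length := by simp [hlen]
        rw [hle]
        exact hmin l' hl'T hl'prod
  · rintro p₁ p₂ ⟨x, h1, h2⟩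
    have e1 := h1.2.2 (p₂ ++ x) h2.1 h2.2.1
    have e2 := h2.2.2 (p₁ ++ x) h1.1 h1.2.1
    have hle : (p₁ ++ x).length = (p₂ ++ x).length := le_antisymm e1 e2
    simpa using hle
end

section
/- Let W be a Coxeter group, T its set of reflections, and c a Coxeter element. The map sending a prefix-equivalence class P of the chain system C_c of reduced T-words for c to the product Πp ∈ W of any representative p ∈ P is a well-defined isomorphism from the prefix-order poset of C_c onto the interval [1,c]_T in the absolute order on W. Moreover, each cover P ⋖ Q is labeled by the unique reflection t ∈ T such that pt represents Q for any p ∈ P, and under the isomorphism this corresponds to the cover u ⋖ ut in [1,c]_T. -/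
open ChainSys

/-- The absolute (reflection) length of `w`: the minimal length of a `T`-word for `w`. -/
noncomputable def absLength {B W : Type*} [Group W] {M : CoxeterMatrix B}
    (cs : CoxeterSystem M W) (w : W) : ℕ :=
  sInf {n | ∃ l : List W, IsTWord cs l ∧ l.prod = w ∧ l.length = n}

/-- The absolute order: `v ≤_T w` iff `ℓ_T(v) + ℓ_T(v⁻¹ w) = ℓ_T(w)`. -/
def AbsLe {B W : Type*} [Group W] {M : CoxeterMatrix B}
    (cs : CoxeterSystem M W) (v w : W) : Prop :=
  absLength cs v + absLength cs (v⁻¹ * w) = absLength cs w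

section Aux

variable {B W : Type*} [Group W] {M : CoxeterMatrix B} (cs : CoxeterSystem M W)

lemma exists_tword (w : W) : ∃ l : List W, IsTWord cs l ∧ l.prod = w := by
  obtain ⟨ω, rfl⟩ := cs.wordProd_surjective w
  refine ⟨ω.map cs.simple, fun t ht => ?_, rfl⟩
  obtain ⟨i, _, rfl⟩ := List.mem_map.mp ht
  exact cs.isReflection_simple i

lemma absLength_spec (w : W) :
    ∃ l : List W, IsTWord cs l ∧ l.prod = w ∧ l.length = absLength cs w := by
  have hne : {n | ∃ l : List W, IsTWord cs l ∧ l.prod = w ∧ l.length = n}.Nonempty := by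
    obtain ⟨l, hl, hp⟩ := exists_tword cs w
    exact ⟨l.length, l, hl, hp, rfl⟩
  exact Nat.sInf_mem hne

lemma absLength_le (l : List W) (h : IsTWord cs l) : absLength cs l.prod ≤ l.length :=
  Nat.sInf_le ⟨l, h, rfl, rfl⟩

lemma tword_append {l l' : List W} (h : IsTWord cs l) (h' : IsTWord cs l') :
    IsTWord cs (l ++ l') := by
  intro t ht
  rcases List.mem_append.mp ht with h1 | h1
  · exact h t h1
  · exact h' t h1

lemma absLength_mul_le (u v : W) :
    absLength cs (u * v) ≤ absLength cs u + absLength cs v := by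
  obtain ⟨a, ha, hap, hal⟩ := absLength_spec cs u
  obtain ⟨b, hb, hbp, hbl⟩ := absLength_spec cs v
  have := absLength_le cs (a ++ b) (tword_append cs ha hb)
  simpa [List.prod_append, hap, hbp, hal, hbl] using this

lemma mem_red {c : W} {l : List W} :
    l ∈ RedTWords cs c ↔ IsTWord cs l ∧ l.prod = c ∧ l.length = absLength cs c := by
  constructor
  · rintro ⟨h1, h2, h3⟩
    refine ⟨h1, h2, le_antisymm ?_ ?_⟩
    · obtain ⟨m, hm, hmp, hml⟩ := absLength_spec cs c
      exact hml ▸ h3 m hm hmp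
    · rw [← h2]; exact absLength_le cs l h1
  · rintro ⟨h1, h2, h3⟩
    refine ⟨h1, h2, fun l' hl' hp' => ?_⟩
    rw [h3, ← hp']
    exact absLength_le cs l' hl'

lemma split_red {c : W} {p x : List W} (h : p ++ x ∈ RedTWords cs c) :
    absLength cs p.prod = p.length ∧ absLength cs x.prod = x.length ∧
      IsTWord cs p ∧ IsTWord cs x ∧ p.prod * x.prod = c := by
  obtain ⟨h1, h2, h3⟩ := (mem_red cs).mp h
  have hp : IsTWord cs p := fun t ht => h1 t (by simp [ht])
  have hx : IsTWord cs x := fun t ht => h1 t (by simp [ht])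
  have hprod : p.prod * x.prod = c := by rw [← List.prod_append]; exact h2
  have hle1 := absLength_le cs p hp
  have hle2 := absLength_le cs x hx
  have hge : absLength cs c ≤ absLength cs p.prod + absLength cs x.prod := by
    have := absLength_mul_le cs p.prod x.prod
    rwa [hprod] at this
  have hlen : p.length + x.length = absLength cs c := by
    simpa using h3
  exact ⟨by omega, by omega, hp, hx, hprod⟩

lemma preEquiv_prod {c : W} {p q : List W} (h : PreEquiv (RedTWords cs c) p q) :
    p.prod = q.prod := by
  obtain ⟨x, h1, h2⟩ := h
  have e1 := (split_red cs h1).2.2.2.2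
  have e2 := (split_red cs h2).2.2.2.2
  exact mul_right_cancel (e1.trans e2.symm)

lemma prod_preEquiv {c : W} {p q : List W} (hp : PreWord (RedTWords cs c) p)
    (hq : PreWord (RedTWords cs c) q) (hpq : p.prod = q.prod) :
    PreEquiv (RedTWords cs c) p q := by
  obtain ⟨x, hx⟩ := hp
  obtain ⟨y, hy⟩ := hq
  obtain ⟨e1, _, htp, _, _⟩ := split_red cs hx
  obtain ⟨e1', _, _, hty, hprody⟩ := split_red cs hy
  have hlen : p.length = q.length := by rw [← e1, ← e1', hpq]
  have hql : q.length + y.length = absLength cs c := by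
    simpa using ((mem_red cs).mp hy).2.2
  have hmem : p ++ y ∈ RedTWords cs c := by
    refine (mem_red cs).mpr ⟨tword_append cs htp hty, ?_, ?_⟩
    · rw [List.prod_append, hpq, hprody]
    · simp [hlen, hql]
  exact ⟨y, hmem, hy⟩

end Aux

/-- The map sending a prefix-equivalence class of the chain system of
reduced `T`-words for `c` to the product of any representative is a well-defined isomorphism
from the prefix-order poset onto the interval `[1,c]_T` in the absolute order; each cover
`P ⋖ Q` is labeled by the unique reflection `t` with `pt ∈ Q` for `p ∈ P`, and corresponds
to the cover `u ⋖ ut` in `[1,c]_T`. -/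
theorem statement_11 {B W : Type*} [Group W] {M : CoxeterMatrix B}
    (cs : CoxeterSystem M W) (c : W) (hc : IsCoxeterElement cs c) :
    -- well-definedness and injectivity: equal classes ↔ equal products
    (∀ p q : List W, PreWord (RedTWords cs c) p → PreWord (RedTWords cs c) q →
      (PreEquiv (RedTWords cs c) p q ↔ p.prod = q.prod)) ∧
    -- the image lies in the interval `[1,c]_T`
    (∀ p : List W, PreWord (RedTWords cs c) p → AbsLe cs p.prod c) ∧
    -- surjectivity onto the interval
    (∀ w : W, AbsLe cs w c → ∃ p : List W, PreWord (RedTWords cs c) p ∧ p.prod = w) ∧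
    -- the map is an order isomorphism
    (∀ p q : List W, PreWord (RedTWords cs c) p → PreWord (RedTWords cs c) q →
      (LePre (RedTWords cs c) p q ↔ AbsLe cs p.prod q.prod)) ∧
    -- labels: each cover `P ⋖ Q` is labeled by a unique reflection `t`, and `Q` is
    -- represented by elements of product `(Πp) * t`
    (∀ p q : List W, CoverPre (RedTWords cs c) p q →
      ∃ t : W, cs.IsReflection t ∧ PreEquiv (RedTWords cs c) (p ++ [t]) q ∧
        q.prod = p.prod * t ∧
        ∀ t' : W, PreEquiv (RedTWords cs c) (p ++ [t']) q → t' = t) := by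
  set C := RedTWords cs c with hC
  have key1 : ∀ p q : List W, PreEquiv C p q → p.prod = q.prod :=
    fun p q h => preEquiv_prod cs h
  have key2 : ∀ p q : List W, PreWord C p → PreWord C q → p.prod = q.prod →
      PreEquiv C p q := fun p q hp hq h => prod_preEquiv cs hp hq h
  refine ⟨?_, ?_, ?_, ?_, ?_⟩
  · -- part 1
    intro p q hp hq
    exact ⟨key1 p q, key2 p q hp hq⟩
  · -- part 2
    rintro p ⟨x, hx⟩
    obtain ⟨e1, e2, _, _, hprod⟩ := split_red cs hx
    have hinv : p.prod⁻¹ * c = x.prod := by rw [← hprod]; group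
    have hlen : p.length + x.length = absLength cs c := by
      simpa using ((mem_red cs).mp hx).2.2
    unfold AbsLe
    rw [hinv, e1, e2, hlen]
  · -- part 3 : surjectivity
    intro w hw
    obtain ⟨a, ha, hap, hal⟩ := absLength_spec cs w
    obtain ⟨b, hb, hbp, hbl⟩ := absLength_spec cs (w⁻¹ * c)
    have hmem : a ++ b ∈ C := by
      refine (mem_red cs).mpr ⟨tword_append cs ha hb, ?_, ?_⟩
      · rw [List.prod_append, hap, hbp]; group
      · simp only [List.length_append, hal, hbl]; exact hw
    exact ⟨a, ⟨b, hmem⟩, hap⟩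
  · -- part 4 : order isomorphism
    intro p q hp hq
    constructor
    · rintro ⟨p', q', hpp', hqq', ⟨r, rfl⟩⟩
      have epq : p.prod = p'.prod := key1 _ _ hpp'
      have eq' : q.prod = (p' ++ r).prod := key1 _ _ hqq'
      obtain ⟨y, hqy, hq'y⟩ := hqq'
      have h2 : p' ++ (r ++ y) ∈ C := by simpa [List.append_assoc] using hq'y
      obtain ⟨e1, _, _, htry, _⟩ := split_red cs h2
      have htr : IsTWord cs r := fun t ht => htry t (by simp [ht])
      have e2 : absLength cs (p' ++ r).prod = p'.length + r.length := by
        have := (split_red cs hq'y).1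
        simpa using this
      have hle : absLength cs r.prod ≤ r.length := absLength_le cs r htr
      have hge : absLength cs (p' ++ r).prod ≤
          absLength cs p'.prod + absLength cs r.prod := by
        rw [List.prod_append]; exact absLength_mul_le cs _ _
      have hr : absLength cs r.prod = r.length := by omega
      have hinv : p.prod⁻¹ * q.prod = r.prod := by
        rw [epq, eq', List.prod_append]; group
      unfold AbsLe
      rw [hinv, epq, e1, hr, eq', e2]
    · intro hab
      obtain ⟨x, hx⟩ := hp
      obtain ⟨y, hy⟩ := hq
      obtain ⟨m, hm, hmp, hml⟩ := absLength_spec cs (p.prod⁻¹ * q.prod)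
      obtain ⟨ep, _, htp, _, _⟩ := split_red cs hx
      obtain ⟨eq', _, htq, hty, _⟩ := split_red cs hy
      have hqyprod : q.prod * y.prod = c := (split_red cs hy).2.2.2.2
      have hqyl : q.length + y.length = absLength cs c := by
        simpa using ((mem_red cs).mp hy).2.2
      have hmem : (p ++ m) ++ y ∈ C := by
        refine (mem_red cs).mpr ⟨tword_append cs (tword_append cs htp hm) hty, ?_, ?_⟩
        · simp only [List.prod_append, hmp]
          rw [show p.prod * (p.prod⁻¹ * q.prod) = q.prod by group, hqyprod]
        · simp only [List.length_append, hml]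
          have : p.length + absLength cs (p.prod⁻¹ * q.prod) = q.length := by
            rw [← ep, ← eq']; exact hab
          omega
      exact ⟨p, p ++ m, ⟨x, hx, hx⟩, ⟨y, hy, hmem⟩, ⟨m, rfl⟩⟩
  · -- part 5 : cover labels
    rintro p q ⟨⟨p', q', hpp', hqq', ⟨r, rfl⟩⟩, hne, hmax⟩
    have epq : p.prod = p'.prod := key1 _ _ hpp'
    have eq' : q.prod = (p' ++ r).prod := key1 _ _ hqq'
    obtain ⟨x, hpx, hp'x⟩ := hpp'
    have hppre : PreWord C p := ⟨x, hpx⟩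
    obtain ⟨y, hqy, hq'y⟩ := hqq'
    have hqpre : PreWord C q := ⟨y, hqy⟩
    cases r with
    | nil =>
      exact absurd (key2 p q hppre hqpre (by rw [epq, eq']; simp)) hne
    | cons t r₂ =>
      have hmidmem : (p' ++ [t]) ++ (r₂ ++ y) ∈ C := by
        simpa [List.append_assoc] using hq'y
      have h1 : LePre C p (p' ++ [t]) :=
        ⟨p', p' ++ [t], ⟨x, hpx, hp'x⟩, ⟨r₂ ++ y, hmidmem, hmidmem⟩, ⟨[t], rfl⟩⟩
      have h2 : LePre C (p' ++ [t]) q :=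
        ⟨p' ++ [t], p' ++ (t :: r₂), ⟨r₂ ++ y, hmidmem, hmidmem⟩, ⟨y, hqy, hq'y⟩,
          ⟨r₂, by simp⟩⟩
      have emid : absLength cs (p' ++ [t]).prod = p'.length + 1 := by
        have := (split_red cs hmidmem).1
        simpa using this
      have ep' : absLength cs p'.prod = p'.length := (split_red cs hp'x).1
      rcases hmax _ h1 h2 with hcase | hcase
      · exfalso
        have := key1 _ _ hcase
        rw [this] at emid
        have ep2 : absLength cs p.prod = p'.length := by rw [epq, ep']
        omega
      · have hqprod : q.prod = p.prod * t := by
          have h := key1 _ _ hcase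
          rw [← h, List.prod_append, epq]
          simp
        have ht_refl : cs.IsReflection t := ((mem_red cs).mp hq'y).1 t (by simp)
        have hplen : p.length = p'.length := by
          have ep : absLength cs p.prod = p.length := (split_red cs hpx).1
          rw [epq, ep'] at ep
          omega
        have hptmem : (p ++ [t]) ++ (r₂ ++ y) ∈ C := by
          obtain ⟨htw, hpr, hln⟩ := (mem_red cs).mp hmidmem
          refine (mem_red cs).mpr ⟨?_, ?_, ?_⟩
          · intro u hu
            rcases List.mem_append.mp hu with h' | h'
            · rcases List.mem_append.mp h' with h'' | h''
              · exact (split_red cs hpx).2.2.1 u h''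
              · have hut : u = t := by simpa using h''
                exact htw u (by simp [hut])
            · exact htw u (by simp [h'])
          · rw [← hpr]
            simp [List.prod_append, epq]
          · rw [← hln]
            simp [hplen]
        have hequiv : PreEquiv C (p ++ [t]) q := by
          refine key2 _ _ ⟨r₂ ++ y, hptmem⟩ hqpre ?_
          rw [hqprod]; simp
        refine ⟨t, ht_refl, hequiv, hqprod, fun t' h' => ?_⟩
        have := key1 _ _ h'
        rw [hqprod] at this
        simp only [List.prod_append, List.prod_cons, List.prod_nil, mul_one] at this
        exact mul_left_cancel this
end

section
/- Let A be an abelian category, let X and Y be objects whose endomorphism rings are division rings (i.e., X and Y are bricks), and suppose there exist a monomorphism ι : X → Y and an epimorphism q : Y → X. Then X and Y are isomorphic. In particular, if Λ is a finite-dimensional algebra and X is a brick in mod Λ, then X is the unique brick (up to isomorphism) in the extension closure Filt(X). -/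
open CategoryTheory Limits

lemma statement_12_aux {C : Type*} [Category C] [Abelian C] (X Z : C)
    (hX0 : (𝟙 X : X ⟶ X) ≠ 0) (hZ : ∀ f : Z ⟶ Z, f ≠ 0 → IsIso f)
    (i : X ⟶ Z) (hi : Mono i) (p : Z ⟶ X) (hp : Epi p) : Nonempty (X ≅ Z) := by
  have hpi : p ≫ i ≠ 0 := by
    intro h
    have hp0 : p = 0 := by
      rw [← cancel_mono i, h, zero_comp]
    apply hX0
    rw [← cancel_epi p, hp0, zero_comp, comp_zero]
  haveI := hZ _ hpi
  have : IsSplitMono p := ⟨⟨⟨i ≫ inv (p ≫ i), by rw [← Category.assoc, IsIso.hom_inv_id]⟩⟩⟩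
  have : IsIso p := isIso_of_mono_of_epi p
  exact ⟨(asIso p).symm⟩

/-- In an abelian category, if `X` and `Y` are bricks (their endomorphism
rings are division rings, i.e. they are nonzero and every nonzero endomorphism is
invertible) and there exist a monomorphism `X → Y` and an epimorphism `Y → X`, then `X ≅ Y`.
In particular, any brick `Z` admitting a monomorphism from `X` and an epimorphism onto `X`
(as does every brick in the extension closure `Filt(X)`) is isomorphic to `X`. -/
theorem statement_12 {C : Type*} [Category C] [Abelian C] (X Y : C)
    (hX0 : (𝟙 X : X ⟶ X) ≠ 0) (hX : ∀ f : X ⟶ X, f ≠ 0 → IsIso f)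
    (hY0 : (𝟙 Y : Y ⟶ Y) ≠ 0) (hY : ∀ f : Y ⟶ Y, f ≠ 0 → IsIso f)
    (ι : X ⟶ Y) (hι : Mono ι) (q : Y ⟶ X) (hq : Epi q) :
    Nonempty (X ≅ Y) ∧
    ∀ Z : C, (𝟙 Z : Z ⟶ Z) ≠ 0 → (∀ f : Z ⟶ Z, f ≠ 0 → IsIso f) →
      (∃ i : X ⟶ Z, Mono i) → (∃ p : Z ⟶ X, Epi p) → Nonempty (X ≅ Z) := by
  refine ⟨statement_12_aux X Y hX0 hY ι hι q hq, ?_⟩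
  rintro Z _ hZ ⟨i, hi⟩ ⟨p, hp⟩
  exact statement_12_aux X Z hX0 hZ i hi p hp
end
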